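/- Combining the two bounds: for any unit vector ψ in (ℂ^d)^{⊗n} and any k ≥ 1, Λ(ψ)^{2k} ≤ ‖F_k‖² ≤ C(k+d-1,k)^n Λ(ψ)^{2k}, and hence lim_{k→∞} ‖F_k‖^{2/k} = Λ(ψ)². -/

import Mathlib

open scoped InnerProductSpace BigOperators

noncomputable section

variable {n d : ℕ}

/-- The elementary product tensor `a₁ ⊗ ⋯ ⊗ aₙ` in `(ℂ^d)^{⊗n}`. -/
def prodTensor (a : Fin n → EuclideanSpace ℂ (Fin d)) :
    EuclideanSpace ℂ (Fin n → Fin d) :=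
  WithLp.toLp 2 (fun x => ∏ i : Fin n, a i (x i))

/-- The set of overlaps `|⟨a₁ ⊗ ⋯ ⊗ aₙ|ψ⟩|` of `ψ` with unit product vectors. -/
def overlapSet (ψ : EuclideanSpace ℂ (Fin n → Fin d)) : Set ℝ :=
  {r | ∃ a : Fin n → EuclideanSpace ℂ (Fin d),
        (∀ i, ‖a i‖ = 1) ∧ r = ‖⟪prodTensor a, ψ⟫_ℂ‖}

/-- `Λ(ψ)`: the maximal overlap of `ψ` with unit product vectors
(the injective tensor norm). -/
def Lambda (ψ : EuclideanSpace ℂ (Fin n → Fin d)) : ℝ :=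
  sSup (overlapSet ψ)

/-- `ψ^{⊗k}`, viewed as a vector in `⊗ᵢ (Hᵢ)^{⊗k}` with the `k` copies of each
party's space grouped together. -/
def psiPow (ψ : EuclideanSpace ℂ (Fin n → Fin d)) (k : ℕ) :
    EuclideanSpace ℂ (Fin n → Fin k → Fin d) :=
  WithLp.toLp 2 (fun x => ∏ j : Fin k, ψ (fun i => x i j))

/-- `F_k = Π_k^{⊗n} ψ^{⊗k}`: the result of applying the symmetric projector
`Π_k = (1/k!) ∑_π V_π` on the `k` copies of each of the `n` local spaces. -/
def Fvec (ψ : EuclideanSpace ℂ (Fin n → Fin d)) (k : ℕ) :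
    EuclideanSpace ℂ (Fin n → Fin k → Fin d) :=
  ((k.factorial : ℂ) ^ n)⁻¹ •
    ∑ σ : Fin n → Equiv.Perm (Fin k),
      (WithLp.toLp 2 (fun x => psiPow ψ k (fun i j => x i (σ i j))) :
        EuclideanSpace ℂ (Fin n → Fin k → Fin d))

open Filter

set_option maxHeartbeats 1000000

section AuxiliaryLemmas


open Finset

namespace InjAux

variable {k d : ℕ}

/-- number of indices `j` with `x j = a` -/
abbrev cnt (x : Fin k → Fin d) (a : Fin d) : ℕ := Fintype.card {j // x j = a}

lemma cnt_comp_perm (y : Fin k → Fin d) (σ : Equiv.Perm (Fin k)) (a : Fin d) :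
    cnt (y ∘ σ) a = cnt y a :=
  Fintype.card_congr
    (Equiv.subtypeEquiv (p := fun j => (y ∘ σ) j = a) (q := fun j => y j = a) σ
      (fun _ => Iff.rfl))

lemma exists_perm_comp (x y : Fin k → Fin d) (h : ∀ a, cnt x a = cnt y a) :
    ∃ σ : Equiv.Perm (Fin k), y ∘ σ = x := by
  have e : ∀ a, {j // x j = a} ≃ {j // y j = a} := fun a => Fintype.equivOfCardEq (h a)
  exact ⟨Equiv.ofFiberEquiv e, funext fun j => Equiv.ofFiberEquiv_map e j⟩

lemma card_comp_eq (x y : Fin k → Fin d) :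
    Fintype.card {σ : Equiv.Perm (Fin k) // y ∘ ⇑σ = x} =
      ∏ a, if cnt x a = cnt y a then (cnt y a).factorial else 0 := by
  classical
  by_cases h : ∀ a, cnt x a = cnt y a
  · obtain ⟨σ₀, hσ₀⟩ := exists_perm_comp x y h
    have hx : ∀ j, y (σ₀ j) = x j := fun j => congrFun hσ₀ j
    have key : Fintype.card {σ : Equiv.Perm (Fin k) // y ∘ ⇑σ = x}
        = Fintype.card {σ : Equiv.Perm (Fin k) // y ∘ ⇑σ = y} := by
      refine Fintype.card_congr (Equiv.subtypeEquiv (Equiv.mulRight σ₀⁻¹) fun σ => ?_)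
      simp only [Equiv.coe_mulRight]
      constructor
      · intro h1
        have hy : ∀ j, y (σ j) = x j := fun j => congrFun h1 j
        funext j
        show y (σ (σ₀⁻¹ j)) = y j
        rw [hy (σ₀⁻¹ j), ← hx (σ₀⁻¹ j)]
        simp
      · intro h1
        have hy : ∀ j, y (σ (σ₀⁻¹ j)) = y j := fun j => congrFun h1 j
        funext j
        show y (σ j) = x j
        have := hy (σ₀ j)
        rw [show σ₀⁻¹ (σ₀ j) = j from σ₀.symm_apply_apply j] at this
        rw [this, hx j]
    rw [key, DomMulAct.stabilizer_card y]
    exact Finset.prod_congr rfl fun a _ => by rw [if_pos (h a)]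
  · push_neg at h
    obtain ⟨a₀, ha₀⟩ := h
    have he : IsEmpty {σ : Equiv.Perm (Fin k) // y ∘ ⇑σ = x} :=
      ⟨fun ⟨σ, hσ⟩ => ha₀ (by rw [← hσ, cnt_comp_perm])⟩
    rw [Fintype.card_eq_zero]
    refine (Finset.prod_eq_zero (mem_univ a₀) ?_).symm
    rw [if_neg ha₀]

lemma prod_count {M : Type*} [CommMonoid M] (v : Fin d → M) (x : Fin k → Fin d) :
    ∏ j, v (x j) = ∏ a, v a ^ cnt x a := by
  classical
  rw [← Finset.prod_fiberwise_of_maps_to (g := x) (t := Finset.univ)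
    (fun j _ => Finset.mem_univ (x j)) (fun j => v (x j))]
  refine Finset.prod_congr rfl fun a _ => ?_
  have h1 : ∀ j ∈ Finset.univ.filter (fun j => x j = a), v (x j) = v a := fun j hj => by
    rw [(Finset.mem_filter.mp hj).2]
  rw [Finset.prod_congr rfl h1, Finset.prod_const]
  congr 1
  exact (Fintype.card_subtype _).symm

lemma sum_prod_cnt_factorial :
    ∑ f : Fin k → Fin d, ∏ a, (cnt f a).factorial
      = k.factorial * (k + d - 1).choose k := by
  classical
  set T : (Fin k → Fin d) → Sym (Fin d) k := fun f => ⟨Multiset.map f Finset.univ.val, by simp⟩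
    with hT
  have hcount : ∀ (f : Fin k → Fin d) (a : Fin d),
      Multiset.count a (Multiset.map f Finset.univ.val) = cnt f a := by
    intro f a
    rw [Multiset.count_map]
    have h2 : Multiset.filter (fun j => a = f j) Finset.univ.val
        = Multiset.filter (fun j => f j = a) Finset.univ.val :=
      Multiset.filter_congr (fun j _ => ⟨Eq.symm, Eq.symm⟩)
    rw [h2]
    have h3 : Multiset.card (Multiset.filter (fun j => f j = a) Finset.univ.val)
        = (Finset.univ.filter (fun j => f j = a)).card := rfl
    rw [h3]
    exact (Fintype.card_subtype _).symm
  have h1 : ∀ f g, T f = T g ↔ ∀ a, cnt f a = cnt g a := by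
    intro f g
    rw [← Sym.coe_inj]
    show Multiset.map f Finset.univ.val = Multiset.map g Finset.univ.val ↔ _
    rw [Multiset.ext]
    constructor
    · intro h a; rw [← hcount f a, ← hcount g a]; exact h a
    · intro h a; rw [hcount f a, hcount g a]; exact h a
  have surjT : Function.Surjective T := by
    intro s
    obtain ⟨l, hl⟩ : ∃ l : List (Fin d), (l : Multiset (Fin d)) = s.1 :=
      ⟨s.1.toList, s.1.coe_toList⟩
    have hlen : l.length = k := by
      have h2 := s.2
      rw [← hl] at h2
      simpa using h2
    subst hlen
    refine ⟨l.get, Subtype.ext ?_⟩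
    show Multiset.map l.get Finset.univ.val = s.1
    rw [← hl, Fin.univ_def]
    show Multiset.map l.get ↑(List.finRange l.length) = (l : Multiset (Fin d))
    rw [Multiset.map_coe, List.map_get_finRange]
  rw [← Finset.sum_fiberwise_of_maps_to (g := T) (t := Finset.univ) (fun f _ => mem_univ (T f))]
  have inner : ∀ s : Sym (Fin d) k,
      (∑ f ∈ Finset.univ.filter (fun f => T f = s), ∏ a, (cnt f a).factorial)
        = k.factorial := by
    intro s
    obtain ⟨g, hg⟩ := surjT s
    -- all f in the fiber have the same counts as g
    have hsame : ∀ f ∈ Finset.univ.filter (fun f => T f = s), ∀ a, cnt f a = cnt g a := by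
      intro f hf a
      rw [Finset.mem_filter] at hf
      exact (h1 f g).mp (hf.2.trans hg.symm) a
    have step1 : (∑ f ∈ Finset.univ.filter (fun f => T f = s), ∏ a, (cnt f a).factorial)
        = ∑ f ∈ Finset.univ.filter (fun f => T f = s), ∏ a, (cnt g a).factorial := by
      refine Finset.sum_congr rfl fun f hf => Finset.prod_congr rfl fun a _ => ?_
      rw [hsame f hf a]
    rw [step1, Finset.sum_const]
    -- count the fiber via permutations
    have hmaps : ∀ σ : Equiv.Perm (Fin k), σ ∈ Finset.univ →
        (g ∘ ⇑σ) ∈ Finset.univ.filter (fun f => T f = s) := by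
      intro σ _
      rw [Finset.mem_filter]
      refine ⟨mem_univ _, ?_⟩
      rw [← hg]
      exact (h1 (g ∘ ⇑σ) g).mpr (fun a => cnt_comp_perm g σ a)
    have hcard := Finset.card_eq_sum_card_fiberwise hmaps
    rw [Finset.card_univ, Fintype.card_perm, Fintype.card_fin] at hcard
    have hfib : ∀ f ∈ Finset.univ.filter (fun f => T f = s),
        (Finset.univ.filter (fun σ : Equiv.Perm (Fin k) => g ∘ ⇑σ = f)).card
          = ∏ a, (cnt g a).factorial := by
      intro f hf
      have := card_comp_eq f g
      rw [Fintype.card_subtype] at this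
      rw [this]
      exact Finset.prod_congr rfl fun a _ => by rw [if_pos (hsame f hf a)]
    rw [Finset.sum_congr rfl hfib] at hcard
    rw [Finset.sum_const] at hcard
    rw [smul_eq_mul] at hcard ⊢
    exact hcard.symm
  rw [Finset.sum_congr rfl (fun s _ => inner s), Finset.sum_const, smul_eq_mul,
    Finset.card_univ, Sym.card_sym_eq_multichoose, Nat.multichoose_eq, Fintype.card_fin]
  rw [mul_comm]
  congr 2
  omega

end InjAux


open MeasureTheory Real Set
open scoped ENNReal NNReal

namespace InjAux

noncomputable section

def nu1 : Measure ℝ :=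
  (volume.restrict (Ioi 0)).withDensity fun s => ((Real.exp (-s)).toNNReal : ℝ≥0∞)

lemma meas_dens : Measurable fun s : ℝ => (Real.exp (-s)).toNNReal :=
  (Real.continuous_exp.comp continuous_neg).measurable.real_toNNReal

lemma base_integrable (p : ℕ) :
    IntegrableOn (fun s => Real.exp (-s) * s ^ p) (Ioi (0:ℝ)) := by
  have h := Real.GammaIntegral_convergent (s := (p:ℝ) + 1) (by positivity)
  refine h.congr_fun (fun x hx => ?_) measurableSet_Ioi
  rw [add_sub_cancel_right]
  simp only [Real.rpow_natCast]

lemma base_integral (p : ℕ) :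
    ∫ s in Ioi (0:ℝ), Real.exp (-s) * s ^ p = p.factorial := by
  have h := Real.Gamma_eq_integral (s := (p:ℝ) + 1) (by positivity)
  rw [Real.Gamma_nat_eq_factorial] at h
  rw [h]
  refine setIntegral_congr_fun measurableSet_Ioi (fun x hx => ?_)
  rw [add_sub_cancel_right, Real.rpow_natCast]

instance : IsProbabilityMeasure nu1 := by
  constructor
  rw [nu1, withDensity_apply _ MeasurableSet.univ, setLIntegral_univ]
  have hint : Integrable (fun s => Real.exp (-s)) (volume.restrict (Ioi 0)) := by
    have := base_integrable 0
    simp at this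
    exact this
  have h1 : ∫⁻ s, ((Real.exp (-s)).toNNReal : ℝ≥0∞) ∂(volume.restrict (Ioi 0))
      = ENNReal.ofReal (∫ s in Ioi (0:ℝ), Real.exp (-s)) := by
    rw [ofReal_integral_eq_lintegral_ofReal hint
      (Filter.Eventually.of_forall fun s => (Real.exp_pos _).le)]
    rfl
  rw [h1]
  have h2 : ∫ s in Ioi (0:ℝ), Real.exp (-s) = 1 := by
    have := base_integral 0
    simpa using this
  rw [h2, ENNReal.ofReal_one]

lemma ae_nu1_pos : ∀ᵐ s ∂nu1, s ∈ Ioi (0:ℝ) := by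
  rw [nu1]
  exact Filter.Eventually.filter_mono
    (withDensity_absolutelyContinuous _ _).ae_le (ae_restrict_mem measurableSet_Ioi)

lemma nu1_integrable_pow (p : ℕ) : Integrable (fun s : ℝ => s ^ p) nu1 := by
  rw [nu1, integrable_withDensity_iff_integrable_smul meas_dens]
  refine (base_integrable p).congr (Filter.Eventually.of_forall fun s => ?_)
  simp [NNReal.smul_def, Real.coe_toNNReal _ (Real.exp_pos _).le]

lemma nu1_integral_pow (p : ℕ) : ∫ s, s ^ p ∂nu1 = p.factorial := by
  rw [nu1, integral_withDensity_eq_integral_smul meas_dens]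
  rw [← base_integral p]
  refine setIntegral_congr_fun measurableSet_Ioi (fun x hx => ?_)
  simp [NNReal.smul_def, Real.coe_toNNReal _ (Real.exp_pos _).le]

def nu2 : Measure ℝ := volume.restrict (Ioc (0:ℝ) 1)

instance : IsProbabilityMeasure nu2 :=
  ⟨by rw [nu2, Measure.restrict_apply MeasurableSet.univ, univ_inter, Real.volume_Ioc]; norm_num⟩

def phiC (q : ℝ × ℝ) : ℂ :=
  (Real.sqrt q.1 : ℂ) * Complex.exp ((q.2 : ℂ) * (2 * Real.pi * Complex.I))

lemma continuous_phiC : Continuous phiC := by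
  refine Continuous.mul ?_ ?_
  · exact Complex.continuous_ofReal.comp (Real.continuous_sqrt.comp continuous_fst)
  · exact Complex.continuous_exp.comp
      ((Complex.continuous_ofReal.comp continuous_snd).mul continuous_const)

def nuC : Measure ℂ := (nu1.prod nu2).map phiC

instance : IsProbabilityMeasure nuC :=
  Measure.isProbabilityMeasure_map continuous_phiC.measurable.aemeasurable

lemma phase_integral (m : ℤ) (hm : m ≠ 0) :
    ∫ θ, Complex.exp ((m : ℂ) * (2 * Real.pi * Complex.I) * (θ:ℂ)) ∂nu2 = 0 := by
  have hc : (m : ℂ) * (2 * Real.pi * Complex.I) ≠ 0 := by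
    apply mul_ne_zero
    · exact_mod_cast hm
    · simp [Real.pi_ne_zero, Complex.I_ne_zero]
  have h1 : ∫ θ, Complex.exp ((m : ℂ) * (2 * Real.pi * Complex.I) * (θ:ℂ)) ∂nu2
      = ∫ θ in (0:ℝ)..1, Complex.exp ((m : ℂ) * (2 * Real.pi * Complex.I) * (θ:ℂ)) := by
    rw [intervalIntegral.integral_of_le zero_le_one]
    rfl
  rw [h1, integral_exp_mul_complex hc]
  have h2 : ((m : ℂ) * (2 * Real.pi * Complex.I) * ((1:ℝ):ℂ)) = (m:ℂ) * (2 * Real.pi * Complex.I) := by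
    norm_num
  have h3 : ((m : ℂ) * (2 * Real.pi * Complex.I) * ((0:ℝ):ℂ)) = 0 := by norm_num
  rw [h2, h3, Complex.exp_zero, Complex.exp_int_mul_two_pi_mul_I]
  simp

lemma phiC_pow (p q : ℕ) (r : ℝ × ℝ) :
    (phiC r) ^ p * (starRingEnd ℂ (phiC r)) ^ q
      = ((Real.sqrt r.1 ^ (p + q) : ℝ) : ℂ)
        * Complex.exp ((((p:ℤ) - (q:ℤ) : ℤ) : ℂ) * (2 * Real.pi * Complex.I) * (r.2:ℂ)) := by
  have hc : (starRingEnd ℂ) ((r.2:ℂ) * (2 * Real.pi * Complex.I))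
      = -((r.2:ℂ) * (2 * Real.pi * Complex.I)) := by
    simp only [map_mul, Complex.conj_ofReal, Complex.conj_I, map_ofNat]
    ring
  have hconj : (starRingEnd ℂ) (phiC r)
      = (Real.sqrt r.1 : ℂ) * Complex.exp (-((r.2 : ℂ) * (2 * Real.pi * Complex.I))) := by
    rw [phiC, map_mul, Complex.conj_ofReal, ← Complex.exp_conj, hc]
  rw [hconj, phiC, mul_pow, mul_pow]
  rw [← Complex.exp_nat_mul, ← Complex.exp_nat_mul]
  rw [Complex.ofReal_pow, pow_add]
  rw [show ((p:ℤ) - (q:ℤ) : ℤ) * ((2:ℂ) * Real.pi * Complex.I) * (r.2:ℂ)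
      = (p:ℕ) * ((r.2:ℂ) * (2 * Real.pi * Complex.I))
        + (q:ℕ) * -((r.2:ℂ) * (2 * Real.pi * Complex.I)) by push_cast; ring]
  rw [Complex.exp_add]
  ring

lemma nuC_moment (p q : ℕ) :
    ∫ z, z ^ p * (starRingEnd ℂ z) ^ q ∂nuC = if p = q then (p.factorial : ℂ) else 0 := by
  have hsm : AEStronglyMeasurable (fun z : ℂ => z ^ p * (starRingEnd ℂ z) ^ q) nuC :=
    ((continuous_pow p).mul (Complex.continuous_conj.pow q)).aestronglyMeasurable
  rw [nuC, integral_map continuous_phiC.measurable.aemeasurable (by rw [← nuC]; exact hsm)]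
  have h1 : (fun r : ℝ × ℝ => (phiC r) ^ p * (starRingEnd ℂ (phiC r)) ^ q)
      = fun r : ℝ × ℝ => (fun s : ℝ => ((Real.sqrt s ^ (p + q) : ℝ) : ℂ)) r.1
        * (fun θ : ℝ => Complex.exp ((((p:ℤ) - (q:ℤ) : ℤ) : ℂ) * (2 * Real.pi * Complex.I) * (θ:ℂ))) r.2 :=
    funext (phiC_pow p q)
  rw [h1]
  rw [MeasureTheory.integral_prod_mul (μ := nu1) (ν := nu2)
    (f := fun s : ℝ => ((Real.sqrt s ^ (p + q) : ℝ) : ℂ))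
    (g := fun θ : ℝ => Complex.exp ((((p:ℤ) - (q:ℤ) : ℤ) : ℂ) * (2 * Real.pi * Complex.I) * (θ:ℂ)))]
  by_cases hpq : p = q
  · subst hpq
    rw [if_pos rfl]
    have h2 : ∫ θ, Complex.exp ((((p:ℤ) - (p:ℤ) : ℤ) : ℂ) * (2 * Real.pi * Complex.I) * (θ:ℂ)) ∂nu2
        = 1 := by
      simp
    rw [h2, mul_one]
    have h3 : ∫ s, ((Real.sqrt s ^ (p + p) : ℝ) : ℂ) ∂nu1
        = ((∫ s, Real.sqrt s ^ (p+p) ∂nu1 : ℝ) : ℂ) := integral_ofReal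
    rw [h3]
    have h4 : ∫ s, Real.sqrt s ^ (p + p) ∂nu1 = ∫ s, s ^ p ∂nu1 := by
      refine integral_congr_ae (ae_nu1_pos.mono fun s hs => ?_)
      show Real.sqrt s ^ (p + p) = s ^ p
      rw [← two_mul, pow_mul, Real.sq_sqrt (le_of_lt hs)]
    rw [h4, nu1_integral_pow]
    norm_cast
  · rw [if_neg hpq]
    have hm : ((p:ℤ) - (q:ℤ)) ≠ 0 := by
      intro h
      exact hpq (by omega)
    rw [phase_integral _ hm, mul_zero]

lemma nuC_integrable (p q : ℕ) :
    Integrable (fun z : ℂ => z ^ p * (starRingEnd ℂ z) ^ q) nuC := by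
  have hsm : AEStronglyMeasurable (fun z : ℂ => z ^ p * (starRingEnd ℂ z) ^ q) nuC :=
    ((continuous_pow p).mul (Complex.continuous_conj.pow q)).aestronglyMeasurable
  rw [nuC, integrable_map_measure (by rw [← nuC]; exact hsm)
    continuous_phiC.measurable.aemeasurable]
  have h1 : (fun z : ℂ => z ^ p * (starRingEnd ℂ z) ^ q) ∘ phiC
      = fun r : ℝ × ℝ => (fun s : ℝ => ((Real.sqrt s ^ (p + q) : ℝ) : ℂ)) r.1
        * (fun θ : ℝ => Complex.exp ((((p:ℤ) - (q:ℤ) : ℤ) : ℂ) * (2 * Real.pi * Complex.I) * (θ:ℂ))) r.2 :=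
    funext (phiC_pow p q)
  rw [h1]
  refine MeasureTheory.Integrable.mul_prod (μ := nu1) (ν := nu2)
    (f := fun s : ℝ => ((Real.sqrt s ^ (p + q) : ℝ) : ℂ))
    (g := fun θ : ℝ => Complex.exp ((((p:ℤ) - (q:ℤ) : ℤ) : ℂ) * (2 * Real.pi * Complex.I) * (θ:ℂ)))
    ?_ ?_
  · refine Integrable.mono' ((integrable_const (1:ℝ)).add (nu1_integrable_pow (p+q)))
      (Complex.continuous_ofReal.comp (Real.continuous_sqrt.pow (p+q))).aestronglyMeasurable
      (ae_nu1_pos.mono fun s hs => ?_)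
    simp only [Pi.add_apply]
    rw [Complex.norm_real, Real.norm_eq_abs, abs_of_nonneg (by positivity)]
    rcases le_or_gt s 1 with h | h
    · have hs1 : Real.sqrt s ≤ 1 := by
        rw [show (1:ℝ) = Real.sqrt 1 by simp]
        exact Real.sqrt_le_sqrt h
      have : Real.sqrt s ^ (p+q) ≤ 1 := by
        calc Real.sqrt s ^ (p+q) ≤ 1 ^ (p+q) := pow_le_pow_left₀ (Real.sqrt_nonneg s) hs1 _
          _ = 1 := one_pow _
      have hp : (0:ℝ) ≤ s ^ (p+q) := pow_nonneg hs.le _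
      linarith
    · have h1s : Real.sqrt s ≤ s := by
        nlinarith [Real.sq_sqrt (le_of_lt hs), Real.sqrt_nonneg s]
      have : Real.sqrt s ^ (p+q) ≤ s ^ (p+q) := pow_le_pow_left₀ (Real.sqrt_nonneg s) h1s _
      linarith
  · refine Integrable.mono' (integrable_const (1:ℝ))
      (Complex.continuous_exp.comp (continuous_const.mul Complex.continuous_ofReal)).aestronglyMeasurable
      (Filter.Eventually.of_forall fun θ => ?_)
    rw [Complex.norm_exp]
    have h0 : ((((p:ℤ) - (q:ℤ) : ℤ) : ℂ) * (2 * Real.pi * Complex.I) * (θ:ℂ)).re = 0 := by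
      simp [Complex.mul_re, Complex.mul_im]
    rw [h0, Real.exp_zero]

lemma nuC_integrable_normSq (m : ℕ) :
    Integrable (fun z : ℂ => Complex.normSq z ^ m) nuC := by
  have h := (nuC_integrable m m).re
  refine h.congr (Filter.Eventually.of_forall fun z => ?_)
  show (z^m * (starRingEnd ℂ z)^m).re = Complex.normSq z ^ m
  rw [← mul_pow, Complex.mul_conj, ← Complex.ofReal_pow, Complex.ofReal_re]

lemma nuC_integral_normSq (m : ℕ) :
    ∫ z, Complex.normSq z ^ m ∂nuC = m.factorial := by
  have h := nuC_moment m m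
  rw [if_pos rfl] at h
  have h2 : (fun z : ℂ => z^m * (starRingEnd ℂ z)^m)
      = fun z => ((Complex.normSq z ^ m : ℝ) : ℂ) :=
    funext fun z => by rw [← mul_pow, Complex.mul_conj, ← Complex.ofReal_pow]
  have h3 : ∫ z, ((Complex.normSq z ^ m : ℝ) : ℂ) ∂nuC
      = ((∫ z, Complex.normSq z ^ m ∂nuC : ℝ) : ℂ) := integral_ofReal
  rw [h2, h3] at h
  exact_mod_cast h

end
end InjAux
namespace InjAux

open Finset

/-! ### Norms of product vectors -/

lemma sq_sum_norm {I : Type*} [Fintype I] (v : EuclideanSpace ℂ I) :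
    ∑ i, ‖v i‖ ^ 2 = ‖v‖ ^ 2 := by
  rw [EuclideanSpace.norm_eq, Real.sq_sqrt]
  positivity

lemma norm_prodFun {I : Type*} [Fintype I] [DecidableEq I] {J : I → Type*} [∀ i, Fintype (J i)]
    (b : ∀ i, EuclideanSpace ℂ (J i)) (v : EuclideanSpace ℂ (∀ i, J i))
    (hv : ∀ x, v x = ∏ i, b i (x i)) :
    ‖v‖ = ∏ i, ‖b i‖ := by
  rw [EuclideanSpace.norm_eq]
  have key : ∑ x : ∀ i, J i, ‖v x‖ ^ 2 = ∏ i, ‖b i‖ ^ 2 := by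
    have h1 : ∀ x : ∀ i, J i, ‖v x‖ ^ 2 = ∏ i, ‖b i (x i)‖ ^ 2 := by
      intro x
      rw [hv x, norm_prod, ← Finset.prod_pow]
    rw [Finset.sum_congr rfl fun x _ => h1 x]
    rw [← Fintype.piFinset_univ, ← Finset.prod_univ_sum (fun _ => Finset.univ)
      (fun i c => ‖b i c‖ ^ 2)]
    exact Finset.prod_congr rfl fun i _ => sq_sum_norm (b i)
  rw [key, Finset.prod_pow, Real.sqrt_sq (by positivity)]

/-! ### Lambda facts -/

variable (ψ : EuclideanSpace ℂ (Fin n → Fin d))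

lemma overlapSet_eq_image : overlapSet ψ =
    (fun a : Fin n → EuclideanSpace ℂ (Fin d) => ‖⟪prodTensor a, ψ⟫_ℂ‖) ''
      {a | ∀ i, ‖a i‖ = 1} := by
  ext r
  constructor
  · rintro ⟨a, ha, rfl⟩
    exact ⟨a, ha, rfl⟩
  · rintro ⟨a, ha, rfl⟩
    exact ⟨a, ha, rfl⟩

lemma continuous_overlap :
    Continuous (fun a : Fin n → EuclideanSpace ℂ (Fin d) => ‖⟪prodTensor a, ψ⟫_ℂ‖) := by
  have h0 : Continuous fun a : Fin n → EuclideanSpace ℂ (Fin d) =>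
      (fun x : Fin n → Fin d => ∏ i, a i (x i)) := by
    refine continuous_pi fun x => ?_
    refine continuous_finset_prod _ fun i _ => ?_
    exact (continuous_apply (x i)).comp
      ((PiLp.continuous_ofLp 2 (fun _ : Fin d => ℂ)).comp (continuous_apply i))
  have hpt : Continuous fun a : Fin n → EuclideanSpace ℂ (Fin d) => prodTensor a :=
    (PiLp.continuous_toLp 2 (fun _ : Fin n → Fin d => ℂ)).comp h0
  have h2 : Continuous fun a : Fin n → EuclideanSpace ℂ (Fin d) =>
      (⟪prodTensor a, ψ⟫_ℂ : ℂ) := hpt.inner continuous_const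
  exact h2.norm

lemma isCompact_overlapSet : IsCompact (overlapSet ψ) := by
  rw [overlapSet_eq_image]
  refine IsCompact.image ?_ (continuous_overlap ψ)
  have h : {a : Fin n → EuclideanSpace ℂ (Fin d) | ∀ i, ‖a i‖ = 1}
      = Set.pi Set.univ (fun _ => Metric.sphere (0 : EuclideanSpace ℂ (Fin d)) 1) := by
    ext a
    simp [Set.mem_pi, mem_sphere_zero_iff_norm]
  rw [h]
  exact isCompact_univ_pi fun _ => isCompact_sphere 0 1

lemma bddAbove_overlapSet : BddAbove (overlapSet ψ) :=
  (isCompact_overlapSet ψ).bddAbove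

lemma le_Lambda {r : ℝ} (hr : r ∈ overlapSet ψ) : r ≤ Lambda ψ :=
  le_csSup (bddAbove_overlapSet ψ) hr

lemma single_inner (x₀ : Fin n → Fin d) :
    ⟪prodTensor (fun i => EuclideanSpace.single (x₀ i) (1:ℂ)), ψ⟫_ℂ = ψ x₀ := by
  rw [PiLp.inner_apply]
  rw [Finset.sum_eq_single x₀]
  · rw [RCLike.inner_apply']
    show (starRingEnd ℂ) (∏ i, EuclideanSpace.single (x₀ i) (1:ℂ) (x₀ i)) * ψ x₀ = ψ x₀
    have h1 : ∀ i : Fin n, EuclideanSpace.single (x₀ i) (1:ℂ) (x₀ i) = 1 := fun i => by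
      simp [EuclideanSpace.single_apply]
    rw [Finset.prod_congr rfl fun i _ => h1 i]
    simp
  · intro x _ hx
    rw [RCLike.inner_apply']
    show (starRingEnd ℂ) (∏ i, EuclideanSpace.single (x₀ i) (1:ℂ) (x i)) * ψ x = 0
    have : ∃ i, x i ≠ x₀ i := by
      by_contra h
      push_neg at h
      exact hx (funext h)
    obtain ⟨i, hi⟩ := this
    rw [Finset.prod_eq_zero (mem_univ i) (by simp [EuclideanSpace.single_apply, hi])]
    simp
  · intro h
    exact absurd (Finset.mem_univ x₀) h

lemma norm_single_mem (x₀ : Fin n → Fin d) : ‖ψ x₀‖ ∈ overlapSet ψ := by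
  refine ⟨fun i => EuclideanSpace.single (x₀ i) (1:ℂ), fun i => by simp, ?_⟩
  rw [single_inner]

lemma overlapSet_nonempty [Nonempty (Fin n → Fin d)] : (overlapSet ψ).Nonempty :=
  ⟨_, norm_single_mem ψ (Classical.arbitrary _)⟩

lemma Lambda_mem [Nonempty (Fin n → Fin d)] : Lambda ψ ∈ overlapSet ψ :=
  (isCompact_overlapSet ψ).sSup_mem (overlapSet_nonempty ψ)

lemma Lambda_nonneg [Nonempty (Fin n → Fin d)] : 0 ≤ Lambda ψ := by
  obtain ⟨a, _, h⟩ := Lambda_mem ψ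
  rw [h]
  positivity

lemma exists_ne_zero (hψ : ‖ψ‖ = 1) : ∃ x₀ : Fin n → Fin d, ψ x₀ ≠ 0 := by
  by_contra h
  push_neg at h
  have h0 : ‖ψ‖ = 0 := by
    rw [EuclideanSpace.norm_eq]
    have : ∀ x : Fin n → Fin d, ‖ψ x‖ ^ 2 = 0 := fun x => by rw [h x]; simp
    rw [Finset.sum_congr rfl fun x _ => this x]
    simp
  rw [hψ] at h0
  norm_num at h0

lemma nonempty_index (hψ : ‖ψ‖ = 1) : Nonempty (Fin n → Fin d) := by
  obtain ⟨x₀, _⟩ := exists_ne_zero ψ hψ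
  exact ⟨x₀⟩

lemma Lambda_pos (hψ : ‖ψ‖ = 1) : 0 < Lambda ψ := by
  obtain ⟨x₀, hx₀⟩ := exists_ne_zero ψ hψ
  have h1 : ‖ψ x₀‖ ≤ Lambda ψ := le_Lambda ψ (norm_single_mem ψ x₀)
  have h2 : 0 < ‖ψ x₀‖ := norm_pos_iff.mpr hx₀
  linarith

end InjAux
namespace InjAux

open Finset

variable {k : ℕ} (ψ : EuclideanSpace ℂ (Fin n → Fin d))

/-! ### permutation action and basic inner product identities -/

def Wv (k : ℕ) (σ : Fin n → Equiv.Perm (Fin k)) : EuclideanSpace ℂ (Fin n → Fin k → Fin d) :=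
  WithLp.toLp 2 (fun x => psiPow ψ k (fun i j => x i (σ i j)))

lemma Fvec_eq : Fvec ψ k = ((k.factorial : ℂ)^n)⁻¹ • ∑ σ, Wv ψ k σ := rfl

def pe (σ : Fin n → Equiv.Perm (Fin k)) : (Fin n → Fin k → Fin d) ≃ (Fin n → Fin k → Fin d) :=
  Equiv.piCongrRight fun i => Equiv.arrowCongr (σ i).symm (Equiv.refl (Fin d))

lemma pe_apply (σ : Fin n → Equiv.Perm (Fin k)) (x : Fin n → Fin k → Fin d) :
    pe σ x = fun i j => x i (σ i j) := rfl

lemma Wv_apply (σ : Fin n → Equiv.Perm (Fin k)) (x : Fin n → Fin k → Fin d) :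
    Wv ψ k σ x = psiPow ψ k (pe σ x) := rfl

lemma pe_pe (a b : Fin n → Equiv.Perm (Fin k)) (x : Fin n → Fin k → Fin d) :
    pe a (pe b x) = pe (b * a) x := rfl

lemma inner_Wv (σ τ : Fin n → Equiv.Perm (Fin k)) :
    ⟪Wv ψ k σ, Wv ψ k τ⟫_ℂ = ⟪psiPow ψ k, Wv ψ k (σ⁻¹ * τ)⟫_ℂ := by
  rw [PiLp.inner_apply, PiLp.inner_apply]
  refine Fintype.sum_equiv (pe σ) _ _ fun x => ?_
  show (inner ℂ (Wv ψ k σ x) (Wv ψ k τ x) : ℂ)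
      = inner ℂ (psiPow ψ k (pe σ x)) (Wv ψ k (σ⁻¹ * τ) (pe σ x))
  rw [Wv_apply, Wv_apply, Wv_apply, pe_pe, mul_inv_cancel_left]

lemma card_perm_fun : (Fintype.card (Fin n → Equiv.Perm (Fin k)) : ℂ) = (k.factorial : ℂ)^n := by
  rw [Fintype.card_fun, Fintype.card_perm]
  simp

lemma inner_F_eq : ⟪Fvec ψ k, Fvec ψ k⟫_ℂ
    = ((k.factorial : ℂ)^n)⁻¹ * ∑ σ : Fin n → Equiv.Perm (Fin k), ⟪psiPow ψ k, Wv ψ k σ⟫_ℂ := by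
  have hNe : ((k.factorial : ℂ))^n ≠ 0 :=
    pow_ne_zero _ (Nat.cast_ne_zero.mpr (Nat.factorial_ne_zero k))
  rw [Fvec_eq, inner_smul_left, inner_smul_right]
  have hconj : (starRingEnd ℂ) (((k.factorial : ℂ)^n)⁻¹) = ((k.factorial : ℂ)^n)⁻¹ := by
    simp
  rw [hconj]
  have hsum : ⟪∑ σ, Wv ψ k σ, ∑ τ, Wv ψ k τ⟫_ℂ
      = (k.factorial : ℂ)^n * ∑ σ : Fin n → Equiv.Perm (Fin k), ⟪psiPow ψ k, Wv ψ k σ⟫_ℂ := by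
    rw [sum_inner]
    have h1 : ∀ σ : Fin n → Equiv.Perm (Fin k),
        ⟪Wv ψ k σ, ∑ τ, Wv ψ k τ⟫_ℂ = ∑ ρ : Fin n → Equiv.Perm (Fin k),
          ⟪psiPow ψ k, Wv ψ k ρ⟫_ℂ := by
      intro σ
      rw [inner_sum]
      rw [Finset.sum_congr rfl fun τ _ => inner_Wv ψ σ τ]
      exact Equiv.sum_comp (Equiv.mulLeft σ⁻¹) (fun ρ => ⟪psiPow ψ k, Wv ψ k ρ⟫_ℂ)
    rw [Finset.sum_congr rfl fun σ _ => h1 σ, Finset.sum_const, Finset.card_univ,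
      nsmul_eq_mul, card_perm_fun]
  rw [hsum]
  field_simp

/-- expanding a `k`-th power of a finite sum -/
lemma pow_sum {M : Type*} [CommSemiring M] {T : Type*} [Fintype T] [DecidableEq T]
    (g : T → M) (k : ℕ) :
    (∑ t, g t) ^ k = ∑ X : Fin k → T, ∏ j, g (X j) := by
  have h1 : (∑ t, g t)^k = ∏ _j : Fin k, (∑ t, g t) := by
    rw [Finset.prod_const, Finset.card_univ, Fintype.card_fin]
  rw [h1, Finset.prod_univ_sum, Fintype.piFinset_univ]

def Av (a : Fin n → EuclideanSpace ℂ (Fin d)) (k : ℕ) :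
    EuclideanSpace ℂ (Fin n → Fin k → Fin d) :=
  WithLp.toLp 2 (fun x => ∏ i, ∏ j, a i (x i j))

def Bv (a : Fin n → EuclideanSpace ℂ (Fin d)) (k : ℕ) (i : Fin n) :
    EuclideanSpace ℂ (Fin k → Fin d) :=
  WithLp.toLp 2 (fun v => ∏ j, a i (v j))

lemma inner_A_psiPow (a : Fin n → EuclideanSpace ℂ (Fin d)) :
    ⟪Av a k, psiPow ψ k⟫_ℂ = ⟪prodTensor a, ψ⟫_ℂ ^ k := by
  rw [PiLp.inner_apply, PiLp.inner_apply, pow_sum]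
  rw [← Equiv.sum_comp ((Equiv.piComm fun _ _ => Fin d).symm)
    (fun x => (inner ℂ (Av a k x) (psiPow ψ k x) : ℂ))]
  refine Finset.sum_congr rfl fun X _ => ?_
  simp only [RCLike.inner_apply']
  show (starRingEnd ℂ) (∏ i, ∏ j, a i (X j i)) * (∏ j, ψ (X j))
      = ∏ j, (starRingEnd ℂ) (∏ i, a i (X j i)) * ψ (X j)
  rw [Finset.prod_comm, map_prod, ← Finset.prod_mul_distrib]

lemma inner_A_F (a : Fin n → EuclideanSpace ℂ (Fin d)) :
    ⟪Av a k, Fvec ψ k⟫_ℂ = ⟪prodTensor a, ψ⟫_ℂ ^ k := by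
  have hNe : ((k.factorial : ℂ))^n ≠ 0 :=
    pow_ne_zero _ (Nat.cast_ne_zero.mpr (Nat.factorial_ne_zero k))
  rw [Fvec_eq, inner_smul_right, inner_sum]
  have h1 : ∀ σ : Fin n → Equiv.Perm (Fin k),
      ⟪Av a k, Wv ψ k σ⟫_ℂ = ⟪Av a k, psiPow ψ k⟫_ℂ := by
    intro σ
    rw [PiLp.inner_apply, PiLp.inner_apply]
    refine Fintype.sum_equiv (pe σ) _ _ fun x => ?_
    show (inner ℂ (Av a k x) (Wv ψ k σ x) : ℂ) = inner ℂ (Av a k (pe σ x)) (psiPow ψ k (pe σ x))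
    have hA : Av a k (pe σ x) = Av a k x := by
      show ∏ i, ∏ j, a i (pe σ x i j) = ∏ i, ∏ j, a i (x i j)
      refine Finset.prod_congr rfl fun i _ => ?_
      exact Equiv.prod_comp (σ i) (fun j => a i (x i j))
    rw [Wv_apply, hA]
  rw [Finset.sum_congr rfl fun σ _ => h1 σ, Finset.sum_const, Finset.card_univ,
    nsmul_eq_mul, card_perm_fun, inner_A_psiPow]
  field_simp

lemma norm_Av (a : Fin n → EuclideanSpace ℂ (Fin d)) (ha : ∀ i, ‖a i‖ = 1) :
    ‖Av a k‖ = 1 := by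
  have hb : ∀ i : Fin n, ‖Bv a k i‖ = 1 := by
    intro i
    rw [norm_prodFun (fun _ : Fin k => a i) (Bv a k i) (fun v => rfl), Finset.prod_const,
      ha i, one_pow]
  rw [norm_prodFun (Bv a k) (Av a k) (fun x => rfl)]
  rw [Finset.prod_congr rfl fun i _ => hb i, Finset.prod_const, one_pow]

lemma lower_aux (a : Fin n → EuclideanSpace ℂ (Fin d)) (ha : ∀ i, ‖a i‖ = 1) :
    ‖⟪prodTensor a, ψ⟫_ℂ‖ ^ k ≤ ‖Fvec ψ k‖ := by
  calc ‖⟪prodTensor a, ψ⟫_ℂ‖ ^ k = ‖⟪prodTensor a, ψ⟫_ℂ ^ k‖ := (norm_pow _ _).symm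
    _ = ‖⟪Av a k, Fvec ψ k⟫_ℂ‖ := by rw [inner_A_F]
    _ ≤ ‖Av a k‖ * ‖Fvec ψ k‖ := norm_inner_le_norm _ _
    _ = ‖Fvec ψ k‖ := by rw [norm_Av a ha, one_mul]

lemma lower_bound [Nonempty (Fin n → Fin d)] :
    Lambda ψ ^ (2 * k) ≤ ‖Fvec ψ k‖ ^ 2 := by
  obtain ⟨a, ha, hL⟩ := Lambda_mem ψ
  have h1 : Lambda ψ ^ k ≤ ‖Fvec ψ k‖ := by
    rw [hL]
    exact lower_aux ψ a ha
  have h2 : (0:ℝ) ≤ Lambda ψ ^ k := by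
    rw [hL]
    positivity
  calc Lambda ψ ^ (2 * k) = (Lambda ψ ^ k)^2 := by rw [← pow_mul, mul_comm]
    _ ≤ ‖Fvec ψ k‖^2 := by
        apply pow_le_pow_left₀ h2 h1

end InjAux
namespace InjAux

open Finset MeasureTheory

variable {k : ℕ} (ψ : EuclideanSpace ℂ (Fin n → Fin d))

/-! ### the probability space -/

def muOmega (n d : ℕ) : Measure ((Fin n × Fin d) → ℂ) := Measure.pi fun _ => nuC

instance : IsProbabilityMeasure (muOmega n d) := by unfold muOmega; infer_instance

lemma integral_pi_prod {𝕜 : Type*} [RCLike 𝕜] (f : (Fin n × Fin d) → ℂ → 𝕜) :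
    ∫ ω, ∏ c, f c (ω c) ∂(muOmega n d) = ∏ c, ∫ z, f c z ∂nuC := by
  letI : MeasureSpace ℂ := ⟨nuC⟩
  haveI : SigmaFinite (volume : Measure ℂ) := inferInstanceAs (SigmaFinite nuC)
  exact MeasureTheory.integral_fintype_prod_eq_prod f

lemma integrable_pi_prod {𝕜 : Type*} [RCLike 𝕜] (f : (Fin n × Fin d) → ℂ → 𝕜)
    (hf : ∀ c, Integrable (f c) nuC) :
    Integrable (fun ω : (Fin n × Fin d) → ℂ => ∏ c, f c (ω c)) (muOmega n d) := by
  letI : MeasureSpace ℂ := ⟨nuC⟩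
  haveI : SigmaFinite (volume : Measure ℂ) := inferInstanceAs (SigmaFinite nuC)
  exact MeasureTheory.Integrable.fintype_prod hf

def gv (ω : (Fin n × Fin d) → ℂ) (i : Fin n) : EuclideanSpace ℂ (Fin d) := WithLp.toLp 2 (fun a => ω (i, a))

def zf (ω : (Fin n × Fin d) → ℂ) : ℂ := ⟪prodTensor (gv ω), ψ⟫_ℂ

lemma zf_eq (ω : (Fin n × Fin d) → ℂ) :
    zf ψ ω = ∑ t : Fin n → Fin d, (∏ i, (starRingEnd ℂ) (ω (i, t i))) * ψ t := by
  rw [zf, PiLp.inner_apply]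
  refine Finset.sum_congr rfl fun t _ => ?_
  rw [RCLike.inner_apply']
  show (starRingEnd ℂ) (∏ i, ω (i, t i)) * ψ t = _
  rw [map_prod]

lemma conj_zf (ω : (Fin n × Fin d) → ℂ) : (starRingEnd ℂ) (zf ψ ω)
    = ∑ t : Fin n → Fin d, (∏ i, ω (i, t i)) * (starRingEnd ℂ) (ψ t) := by
  rw [zf_eq, map_sum]
  refine Finset.sum_congr rfl fun t _ => ?_
  rw [map_mul, map_prod]
  simp

/-! ### the expansion of the moment integral -/

def cntP (X : Fin k → Fin n → Fin d) : Fin n × Fin d → ℕ :=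
  fun c => cnt (fun j => X j c.1) c.2

def CC (X Y : Fin k → Fin n → Fin d) : ℂ :=
  (∏ j, (starRingEnd ℂ) (ψ (X j))) * (∏ j, ψ (Y j))

def monom (P Q : Fin n × Fin d → ℕ) (ω : (Fin n × Fin d) → ℂ) : ℂ :=
  ∏ c, (ω c)^(P c) * (starRingEnd ℂ (ω c))^(Q c)

lemma integrable_monom (P Q : Fin n × Fin d → ℕ) : Integrable (monom P Q) (muOmega n d) :=
  integrable_pi_prod _ (fun c => nuC_integrable (P c) (Q c))

lemma integral_monom (P Q : Fin n × Fin d → ℕ) :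
    ∫ ω, monom P Q ω ∂(muOmega n d)
      = ∏ c, (if P c = Q c then ((P c).factorial : ℂ) else 0) := by
  have h := integral_pi_prod (n := n) (d := d)
    (f := fun c (w : ℂ) => w ^ P c * (starRingEnd ℂ w) ^ Q c)
  rw [Finset.prod_congr rfl fun c (_ : c ∈ Finset.univ) => nuC_moment (P c) (Q c)] at h
  exact h

lemma expand_pointwise (ω : (Fin n × Fin d) → ℂ) :
    (starRingEnd ℂ (zf ψ ω))^k * (zf ψ ω)^k
      = ∑ X : Fin k → Fin n → Fin d, ∑ Y : Fin k → Fin n → Fin d,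
          CC ψ X Y * monom (cntP X) (cntP Y) ω := by
  rw [conj_zf, zf_eq, pow_sum, pow_sum, Finset.sum_mul_sum]
  refine Finset.sum_congr rfl fun X _ => Finset.sum_congr rfl fun Y _ => ?_
  rw [Finset.prod_mul_distrib, Finset.prod_mul_distrib]
  have hX : ∏ j, ∏ i, ω (i, X j i) = ∏ c : Fin n × Fin d, (ω c) ^ (cntP X c) := by
    rw [Finset.prod_comm, Fintype.prod_prod_type (fun c : Fin n × Fin d => (ω c)^(cntP X c))]
    exact Finset.prod_congr rfl fun i _ => prod_count (fun a => ω (i, a)) (fun j => X j i)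
  have hY : ∏ j, ∏ i, (starRingEnd ℂ) (ω (i, Y j i))
      = ∏ c : Fin n × Fin d, ((starRingEnd ℂ) (ω c)) ^ (cntP Y c) := by
    rw [Finset.prod_comm,
      Fintype.prod_prod_type (fun c : Fin n × Fin d => ((starRingEnd ℂ) (ω c))^(cntP Y c))]
    exact Finset.prod_congr rfl fun i _ =>
      prod_count (fun a => (starRingEnd ℂ) (ω (i, a))) (fun j => Y j i)
  rw [hX, hY, CC, monom, Finset.prod_mul_distrib]
  ring

def NN (X Y : Fin k → Fin n → Fin d) : ℕ :=
  Fintype.card {σf : Fin n → Equiv.Perm (Fin k) //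
    ∀ i, (fun j => X j i) ∘ ⇑(σf i) = fun j => Y j i}

lemma count_to_NN (X Y : Fin k → Fin n → Fin d) :
    (∏ c, (if cntP X c = cntP Y c then ((cntP X c).factorial : ℂ) else 0))
      = (NN X Y : ℂ) := by
  have h1 : NN X Y = ∏ i, Fintype.card
      {σ : Equiv.Perm (Fin k) // (fun j => X j i) ∘ ⇑σ = fun j => Y j i} := by
    rw [NN, Fintype.card_congr (Equiv.subtypePiEquivPi
      (p := fun i (σ : Equiv.Perm (Fin k)) => (fun j => X j i) ∘ ⇑σ = fun j => Y j i)),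
      Fintype.card_pi]
  have h2 : ∀ i : Fin n, Fintype.card
      {σ : Equiv.Perm (Fin k) // (fun j => X j i) ∘ ⇑σ = fun j => Y j i}
        = ∏ a, if cnt (fun j => X j i) a = cnt (fun j => Y j i) a
            then (cnt (fun j => X j i) a).factorial else 0 := by
    intro i
    rw [card_comp_eq (fun j => Y j i) (fun j => X j i)]
    refine Finset.prod_congr rfl fun a _ => ?_
    by_cases h : cnt (fun j => Y j i) a = cnt (fun j => X j i) a
    · rw [if_pos h, if_pos h.symm]
    · rw [if_neg h, if_neg (fun hh => h hh.symm)]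
  have key : NN X Y = ∏ c : Fin n × Fin d,
      (if cntP X c = cntP Y c then (cntP X c).factorial else 0) := by
    rw [h1, Fintype.prod_prod_type (f := fun c : Fin n × Fin d =>
      if cntP X c = cntP Y c then (cntP X c).factorial else 0)]
    exact Finset.prod_congr rfl fun i _ => h2 i
  rw [key, Nat.cast_prod]
  refine Finset.prod_congr rfl fun c _ => ?_
  by_cases h : cntP X c = cntP Y c <;> simp [h]

lemma inner_psiPow_Wv (σ : Fin n → Equiv.Perm (Fin k)) :
    ⟪psiPow ψ k, Wv ψ k σ⟫_ℂ
      = ∑ X : Fin k → Fin n → Fin d, CC ψ X (fun j i => X (σ i j) i) := by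
  rw [PiLp.inner_apply]
  rw [← Equiv.sum_comp ((Equiv.piComm fun _ _ => Fin d).symm)
    (fun x => (inner ℂ (psiPow ψ k x) (Wv ψ k σ x) : ℂ))]
  refine Finset.sum_congr rfl fun X _ => ?_
  rw [RCLike.inner_apply']
  show (starRingEnd ℂ) (∏ j, ψ (X j)) * (∏ j, ψ (fun i => X (σ i j) i)) = CC ψ X _
  rw [CC, map_prod]

lemma sum_NN_CC (X : Fin k → Fin n → Fin d) :
    ∑ Y : Fin k → Fin n → Fin d, CC ψ X Y * (NN X Y : ℂ)
      = ∑ σf : Fin n → Equiv.Perm (Fin k), CC ψ X (fun j i => X (σf i j) i) := by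
  have h1 : ∀ σf : Fin n → Equiv.Perm (Fin k), CC ψ X (fun j i => X (σf i j) i)
      = ∑ Y : Fin k → Fin n → Fin d,
          if (fun j i => X (σf i j) i) = Y then CC ψ X Y else 0 := by
    intro σf
    rw [Finset.sum_ite_eq]
    simp
  rw [Finset.sum_congr rfl fun σf _ => h1 σf, Finset.sum_comm]
  refine Finset.sum_congr rfl fun Y _ => ?_
  rw [← Finset.sum_filter, Finset.sum_const, nsmul_eq_mul, mul_comm]
  congr 1
  rw [show ((Finset.univ.filter
      (fun σf : Fin n → Equiv.Perm (Fin k) => (fun j i => X (σf i j) i) = Y)).card)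
    = Fintype.card {σf : Fin n → Equiv.Perm (Fin k) // (fun j i => X (σf i j) i) = Y}
    from (Fintype.card_subtype _).symm]
  rw [NN]
  norm_cast
  refine Fintype.card_congr (Equiv.subtypeEquivRight fun σf => ?_)
  constructor
  · intro h
    funext j i
    exact congrFun (h i) j
  · intro h i
    funext j
    exact congrFun (congrFun h j) i

lemma E2 : ∫ ω, (starRingEnd ℂ (zf ψ ω))^k * (zf ψ ω)^k ∂(muOmega n d)
    = ∑ σ : Fin n → Equiv.Perm (Fin k), ⟪psiPow ψ k, Wv ψ k σ⟫_ℂ := by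
  have hint : ∫ ω, (starRingEnd ℂ (zf ψ ω))^k * (zf ψ ω)^k ∂(muOmega n d)
      = ∑ X : Fin k → Fin n → Fin d, ∑ Y : Fin k → Fin n → Fin d,
          CC ψ X Y * (NN X Y : ℂ) := by
    rw [show (fun ω => (starRingEnd ℂ (zf ψ ω))^k * (zf ψ ω)^k)
        = fun ω => ∑ X : Fin k → Fin n → Fin d, ∑ Y : Fin k → Fin n → Fin d,
            CC ψ X Y * monom (cntP X) (cntP Y) ω from funext (expand_pointwise ψ)]
    rw [integral_finset_sum _ (fun X _ => integrable_finset_sum _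
      (fun Y _ => (integrable_monom _ _).const_mul _))]
    refine Finset.sum_congr rfl fun X _ => ?_
    rw [integral_finset_sum _ (fun Y _ => (integrable_monom _ _).const_mul _)]
    refine Finset.sum_congr rfl fun Y _ => ?_
    rw [integral_const_mul, integral_monom, count_to_NN]
  rw [hint, Finset.sum_congr rfl fun X (_ : X ∈ Finset.univ) => sum_NN_CC ψ X,
    Finset.sum_comm]
  exact (Finset.sum_congr rfl fun σ _ => (inner_psiPow_Wv ψ σ)).symm

end InjAux
namespace InjAux

open Finset MeasureTheory

variable {k : ℕ} (ψ : EuclideanSpace ℂ (Fin n → Fin d))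

/-! ### the squared norm of `F_k` as a moment integral -/

lemma integrable_zf_pow :
    Integrable (fun ω => (starRingEnd ℂ (zf ψ ω))^k * (zf ψ ω)^k) (muOmega n d) := by
  rw [show (fun ω => (starRingEnd ℂ (zf ψ ω))^k * (zf ψ ω)^k)
      = fun ω => ∑ X : Fin k → Fin n → Fin d, ∑ Y : Fin k → Fin n → Fin d,
          CC ψ X Y * monom (cntP X) (cntP Y) ω from funext (expand_pointwise ψ)]
  exact integrable_finset_sum _ (fun X _ => integrable_finset_sum _
    (fun Y _ => (integrable_monom _ _).const_mul _))

lemma conj_pow_eq_normSq (z : ℂ) (k : ℕ) :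
    (starRingEnd ℂ z)^k * z^k = ((Complex.normSq z ^ k : ℝ) : ℂ) := by
  rw [← mul_pow, mul_comm, Complex.mul_conj, ← Complex.ofReal_pow]

lemma integrable_normSq_zf :
    Integrable (fun ω => Complex.normSq (zf ψ ω)^k) (muOmega n d) := by
  have h := (integrable_zf_pow ψ (k := k)).re
  refine h.congr (Filter.Eventually.of_forall fun ω => ?_)
  show ((starRingEnd ℂ (zf ψ ω))^k * (zf ψ ω)^k).re = Complex.normSq (zf ψ ω) ^ k
  rw [conj_pow_eq_normSq, Complex.ofReal_re]

lemma norm_F_sq : ‖Fvec ψ k‖^2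
    = ((k.factorial : ℝ)^n)⁻¹ * ∫ ω, Complex.normSq (zf ψ ω)^k ∂(muOmega n d) := by
  have h1 : ((‖Fvec ψ k‖^2 : ℝ) : ℂ) = ⟪Fvec ψ k, Fvec ψ k⟫_ℂ := by
    rw [inner_self_eq_norm_sq_to_K]
    norm_cast
  have h2 := inner_F_eq ψ (k := k)
  rw [← E2 ψ] at h2
  have h3 : ∫ ω, (starRingEnd ℂ (zf ψ ω))^k * (zf ψ ω)^k ∂(muOmega n d)
      = ((∫ ω, Complex.normSq (zf ψ ω)^k ∂(muOmega n d) : ℝ) : ℂ) := by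
    rw [show (fun ω => (starRingEnd ℂ (zf ψ ω))^k * (zf ψ ω)^k)
        = fun ω => ((Complex.normSq (zf ψ ω)^k : ℝ) : ℂ)
      from funext fun ω => conj_pow_eq_normSq _ _]
    exact integral_ofReal
  rw [h3] at h2
  have h4 : ((‖Fvec ψ k‖^2 : ℝ) : ℂ)
      = ((((k.factorial : ℝ)^n)⁻¹ * ∫ ω, Complex.normSq (zf ψ ω)^k ∂(muOmega n d) : ℝ) : ℂ) := by
    rw [h1, h2]
    push_cast
    ring
  exact_mod_cast h4

/-! ### the comparison integrand -/

def RR (k : ℕ) (ω : (Fin n × Fin d) → ℂ) : ℝ :=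
  ∏ i, (∑ a, Complex.normSq (ω (i, a)))^k

lemma RR_expand (ω : (Fin n × Fin d) → ℂ) : RR k ω = ∑ G : Fin n → Fin k → Fin d,
    ∏ c : Fin n × Fin d, Complex.normSq (ω c) ^ (cnt (G c.1) c.2) := by
  have h1 : ∀ i : Fin n, (∑ a, Complex.normSq (ω (i,a)))^k
      = ∑ f : Fin k → Fin d, ∏ a, Complex.normSq (ω (i,a)) ^ cnt f a := by
    intro i
    rw [pow_sum]
    exact Finset.sum_congr rfl fun f _ => prod_count (fun a => Complex.normSq (ω (i,a))) f
  rw [RR, Finset.prod_congr rfl fun i _ => h1 i,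
    Finset.prod_univ_sum (fun _ : Fin n => (Finset.univ : Finset (Fin k → Fin d)))
      (fun i f => ∏ a, Complex.normSq (ω (i,a)) ^ cnt f a), Fintype.piFinset_univ]
  refine Finset.sum_congr rfl fun G _ => ?_
  rw [Fintype.prod_prod_type (f := fun c : Fin n × Fin d =>
    Complex.normSq (ω c) ^ (cnt (G c.1) c.2))]

lemma integrable_RR : Integrable (RR k) (muOmega n d) := by
  rw [show (RR k : ((Fin n × Fin d) → ℂ) → ℝ) = fun ω => ∑ G : Fin n → Fin k → Fin d,
      ∏ c : Fin n × Fin d, Complex.normSq (ω c) ^ (cnt (G c.1) c.2) from funext RR_expand]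
  exact integrable_finset_sum _ (fun G _ =>
    integrable_pi_prod (fun c w => Complex.normSq w ^ (cnt (G c.1) c.2))
      (fun c => nuC_integrable_normSq _))

lemma integral_RR : ∫ ω, RR k ω ∂(muOmega n d)
    = ((k.factorial : ℝ) * ((k + d - 1).choose k : ℝ))^n := by
  rw [show (RR k : ((Fin n × Fin d) → ℂ) → ℝ) = fun ω => ∑ G : Fin n → Fin k → Fin d,
      ∏ c : Fin n × Fin d, Complex.normSq (ω c) ^ (cnt (G c.1) c.2) from funext RR_expand]
  rw [integral_finset_sum _ (fun G _ =>
    integrable_pi_prod (fun c w => Complex.normSq w ^ (cnt (G c.1) c.2))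
      (fun c => nuC_integrable_normSq _))]
  have h1 : ∀ G : Fin n → Fin k → Fin d,
      ∫ ω, ∏ c : Fin n × Fin d, Complex.normSq (ω c) ^ (cnt (G c.1) c.2) ∂(muOmega n d)
        = ∏ c : Fin n × Fin d, ((cnt (G c.1) c.2).factorial : ℝ) := by
    intro G
    rw [integral_pi_prod (fun c w => Complex.normSq w ^ (cnt (G c.1) c.2))]
    exact Finset.prod_congr rfl fun c _ => nuC_integral_normSq _
  rw [Finset.sum_congr rfl fun G _ => h1 G]
  have h2 : ∀ G : Fin n → Fin k → Fin d,
      ∏ c : Fin n × Fin d, ((cnt (G c.1) c.2).factorial : ℝ)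
        = ∏ i : Fin n, ∏ a : Fin d, ((cnt (G i) a).factorial : ℝ) := by
    intro G
    rw [Fintype.prod_prod_type (f := fun c : Fin n × Fin d => ((cnt (G c.1) c.2).factorial : ℝ))]
  rw [Finset.sum_congr rfl fun G _ => h2 G]
  have h3 : (∑ f : Fin k → Fin d, ∏ a, ((cnt f a).factorial : ℝ))
      = (k.factorial : ℝ) * ((k + d - 1).choose k : ℝ) := by
    have h := sum_prod_cnt_factorial (k := k) (d := d)
    have hcast : ((∑ f : Fin k → Fin d, ∏ a, (cnt f a).factorial : ℕ) : ℝ)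
        = ((k.factorial * (k + d - 1).choose k : ℕ) : ℝ) := by rw [h]
    push_cast at hcast
    exact hcast
  have hr : ((k.factorial : ℝ) * ((k + d - 1).choose k : ℝ))^n
      = ∑ G : Fin n → Fin k → Fin d, ∏ i, ∏ a, ((cnt (G i) a).factorial : ℝ) := by
    calc ((k.factorial : ℝ) * ((k + d - 1).choose k : ℝ))^n
        = ∏ _i : Fin n, ((k.factorial : ℝ) * ((k + d - 1).choose k : ℝ)) := by
          rw [Finset.prod_const, Finset.card_univ, Fintype.card_fin]
      _ = ∏ _i : Fin n, ∑ f : Fin k → Fin d, ∏ a, ((cnt f a).factorial : ℝ) :=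
          Finset.prod_congr rfl fun i _ => h3.symm
      _ = ∑ G ∈ Fintype.piFinset (fun _ : Fin n => (Finset.univ : Finset (Fin k → Fin d))),
            ∏ i, ∏ a, ((cnt (G i) a).factorial : ℝ) :=
          Finset.prod_univ_sum _ _
      _ = ∑ G : Fin n → Fin k → Fin d, ∏ i, ∏ a, ((cnt (G i) a).factorial : ℝ) := by
          rw [Fintype.piFinset_univ]
  rw [hr]

end InjAux
namespace InjAux

open Finset MeasureTheory

variable {k : ℕ} (ψ : EuclideanSpace ℂ (Fin n → Fin d))

lemma zf_le [Nonempty (Fin n → Fin d)] (ω : (Fin n × Fin d) → ℂ) :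
    ‖zf ψ ω‖ ≤ Lambda ψ * ∏ i, ‖gv ω i‖ := by
  by_cases hg : ∀ i, gv ω i ≠ 0
  · have hw : 0 < ∏ i, ‖gv ω i‖ := Finset.prod_pos fun i _ => norm_pos_iff.mpr (hg i)
    set A : Fin n → EuclideanSpace ℂ (Fin d) :=
      fun i => (‖gv ω i‖⁻¹ : ℂ) • gv ω i with hAdef
    have hA1 : ∀ i, ‖A i‖ = 1 := fun i => norm_smul_inv_norm (hg i)
    have hinner : ⟪prodTensor A, ψ⟫_ℂ = (((∏ i, ‖gv ω i‖)⁻¹ : ℝ) : ℂ) * zf ψ ω := by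
      rw [zf, PiLp.inner_apply, PiLp.inner_apply, Finset.mul_sum]
      refine Finset.sum_congr rfl fun t _ => ?_
      rw [RCLike.inner_apply', RCLike.inner_apply']
      show (starRingEnd ℂ) (∏ i, A i (t i)) * ψ t
          = _ * ((starRingEnd ℂ) (∏ i, gv ω i (t i)) * ψ t)
      have h2 : ∀ i, A i (t i) = ((‖gv ω i‖⁻¹ : ℝ) : ℂ) * gv ω i (t i) := fun i => by
        rw [hAdef]
        show ((‖gv ω i‖⁻¹ : ℂ) • gv ω i) (t i) = _
        rw [PiLp.smul_apply, smul_eq_mul]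
        norm_cast
      have h1 : ∏ i, A i (t i)
          = (((∏ i, ‖gv ω i‖)⁻¹ : ℝ) : ℂ) * ∏ i, gv ω i (t i) := by
        rw [Finset.prod_congr rfl fun i _ => h2 i, Finset.prod_mul_distrib]
        congr 1
        rw [← Complex.ofReal_prod]
        congr 1
        rw [Finset.prod_inv_distrib]
      rw [h1, map_mul, Complex.conj_ofReal]
      ring
    have hmem : ‖⟪prodTensor A, ψ⟫_ℂ‖ ≤ Lambda ψ := le_Lambda ψ ⟨A, hA1, rfl⟩
    rw [hinner, norm_mul, Complex.norm_real, Real.norm_eq_abs,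
      abs_of_nonneg (by positivity)] at hmem
    calc ‖zf ψ ω‖ = (∏ i, ‖gv ω i‖) * ((∏ i, ‖gv ω i‖)⁻¹ * ‖zf ψ ω‖) := by
          field_simp
      _ ≤ (∏ i, ‖gv ω i‖) * Lambda ψ := mul_le_mul_of_nonneg_left hmem hw.le
      _ = Lambda ψ * ∏ i, ‖gv ω i‖ := mul_comm _ _
  · push_neg at hg
    obtain ⟨i₀, hi₀⟩ := hg
    have hz : prodTensor (gv ω) = 0 := by
      ext x
      show ∏ i, gv ω i (x i) = 0
      refine Finset.prod_eq_zero (Finset.mem_univ i₀) ?_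
      rw [hi₀]
      rfl
    rw [zf, hz, inner_zero_left, norm_zero]
    exact mul_nonneg (Lambda_nonneg ψ) (Finset.prod_nonneg fun i _ => norm_nonneg _)

lemma upper_bound [Nonempty (Fin n → Fin d)] :
    ‖Fvec ψ k‖^2 ≤ (((k + d - 1).choose k : ℝ))^n * Lambda ψ ^ (2*k) := by
  rw [norm_F_sq]
  have hpt : ∀ ω, Complex.normSq (zf ψ ω)^k ≤ Lambda ψ ^(2*k) * RR k ω := by
    intro ω
    have h1 : ‖zf ψ ω‖ ≤ Lambda ψ * ∏ i, ‖gv ω i‖ := zf_le ψ ω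
    have h2 : Complex.normSq (zf ψ ω) = ‖zf ψ ω‖^2 := by
      rw [Complex.sq_norm]
    calc Complex.normSq (zf ψ ω)^k = ‖zf ψ ω‖^(2*k) := by rw [h2, ← pow_mul]
      _ ≤ (Lambda ψ * ∏ i, ‖gv ω i‖)^(2*k) := pow_le_pow_left₀ (norm_nonneg _) h1 _
      _ = Lambda ψ^(2*k) * RR k ω := by
          rw [mul_pow, RR]
          congr 1
          rw [← Finset.prod_pow]
          refine Finset.prod_congr rfl fun i _ => ?_
          have h3 : ∑ a, Complex.normSq (ω (i,a)) = ‖gv ω i‖^2 := by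
            rw [← sq_sum_norm (gv ω i)]
            refine Finset.sum_congr rfl fun a _ => ?_
            rw [← Complex.sq_norm]
            rfl
          rw [h3, ← pow_mul]
  have hmono : ∫ ω, Complex.normSq (zf ψ ω)^k ∂(muOmega n d)
      ≤ ∫ ω, Lambda ψ ^(2*k) * RR k ω ∂(muOmega n d) :=
    integral_mono (integrable_normSq_zf ψ) ((integrable_RR (k := k)).const_mul _) hpt
  rw [integral_const_mul, integral_RR] at hmono
  have hfact : (0:ℝ) < (k.factorial : ℝ)^n := by positivity
  calc ((k.factorial : ℝ)^n)⁻¹ * ∫ ω, Complex.normSq (zf ψ ω)^k ∂(muOmega n d)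
      ≤ ((k.factorial : ℝ)^n)⁻¹
        * (Lambda ψ^(2*k) * ((k.factorial : ℝ) * ((k + d - 1).choose k : ℝ))^n) :=
        mul_le_mul_of_nonneg_left hmono (by positivity)
    _ = (((k + d - 1).choose k : ℝ))^n * Lambda ψ ^ (2*k) := by
        rw [mul_pow]
        field_simp

end InjAux
namespace InjAux

open Filter

lemma tendsto_root_C (hdn : 0 < d ∨ n = 0) :
    Tendsto (fun k : ℕ => ((((k + d - 1).choose k : ℝ))^n) ^ ((1:ℝ)/k)) atTop (nhds 1) := by
  rcases hdn with hd | hn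
  swap
  · subst hn
    simp only [pow_zero, Real.one_rpow]
    exact tendsto_const_nhds
  have hup : ∀ k : ℕ, 1 ≤ k → ((((k + d - 1).choose k : ℝ))^n) ^ ((1:ℝ)/k)
      ≤ ((k + d : ℝ)) ^ ((d*n : ℝ)/k) := by
    intro k hk
    have hC : ((k + d - 1).choose k : ℝ) ≤ ((k + d : ℝ))^d := by
      have h2 : k ≤ k + d - 1 := by omega
      have h1 : (k + d - 1).choose k = (k + d - 1).choose (d - 1) := by
        rw [← Nat.choose_symm h2]
        congr 1
        omega
      have h3 : (k + d - 1).choose (d-1) ≤ (k + d - 1)^(d-1) := Nat.choose_le_pow _ _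
      calc ((k + d - 1).choose k : ℝ) = ((k + d - 1).choose (d-1) : ℝ) := by rw [h1]
        _ ≤ (((k + d - 1)^(d-1) : ℕ) : ℝ) := by exact_mod_cast h3
        _ ≤ (((k + d)^d : ℕ) : ℝ) := by
            apply Nat.cast_le.mpr
            calc (k + d - 1)^(d-1) ≤ (k+d)^(d-1) := Nat.pow_le_pow_left (by omega) _
              _ ≤ (k+d)^d := Nat.pow_le_pow_right (by omega) (by omega)
        _ = ((k + d : ℝ))^d := by push_cast; ring
    have hkd : (0:ℝ) ≤ (k:ℝ) + d := by positivity
    calc ((((k + d - 1).choose k : ℝ))^n) ^ ((1:ℝ)/k)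
        ≤ ((((k + d:ℝ))^d)^n) ^ ((1:ℝ)/k) :=
          Real.rpow_le_rpow (by positivity) (pow_le_pow_left₀ (by positivity) hC n)
            (by positivity)
      _ = ((k + d : ℝ)) ^ ((d*n : ℝ)/k) := by
          rw [← pow_mul, ← Real.rpow_natCast ((k+d:ℝ)) (d*n), ← Real.rpow_mul hkd]
          congr 1
          push_cast
          ring
  have hlo : ∀ k : ℕ, 1 ≤ k → (1:ℝ) ≤ ((((k + d - 1).choose k : ℝ))^n) ^ ((1:ℝ)/k) := by
    intro k hk
    apply Real.one_le_rpow _ (by positivity)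
    have h0 : 0 < (k + d - 1).choose k := Nat.choose_pos (by omega)
    have h1 : (1:ℝ) ≤ ((k + d - 1).choose k : ℝ) := by exact_mod_cast h0
    exact one_le_pow₀ h1
  have henv : Tendsto (fun k : ℕ => ((k + d : ℝ)) ^ ((d*n : ℝ)/k)) atTop (nhds 1) := by
    have hlog : Tendsto (fun k : ℕ => Real.log ((k:ℝ) + d) * ((d*n : ℝ)/k)) atTop (nhds 0) := by
      have t1 : Tendsto (fun x : ℝ => Real.log x / x) atTop (nhds 0) :=
        Real.isLittleO_log_id_atTop.tendsto_div_nhds_zero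
      have hk : Tendsto (fun k : ℕ => (k:ℝ) + d) atTop atTop :=
        tendsto_atTop_add_const_right _ _ tendsto_natCast_atTop_atTop
      have t2 : Tendsto (fun k : ℕ => Real.log ((k:ℝ)+d) / ((k:ℝ)+d)) atTop (nhds 0) :=
        t1.comp hk
      have t3 : Tendsto (fun k : ℕ => ((k:ℝ)+d) / k) atTop (nhds 1) := by
        have t5 : Tendsto (fun k : ℕ => (d:ℝ) * ((k:ℝ))⁻¹) atTop (nhds 0) := by
          simpa using tendsto_inv_atTop_nhds_zero_nat.const_mul (d:ℝ)
        have t4 : Tendsto (fun k : ℕ => 1 + (d:ℝ) * ((k:ℝ))⁻¹) atTop (nhds 1) := by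
          simpa using tendsto_const_nhds.add t5
        refine Filter.Tendsto.congr' ?_ t4
        filter_upwards [eventually_ge_atTop 1] with k hk
        have hk0 : (k:ℝ) ≠ 0 := Nat.cast_ne_zero.mpr (by omega)
        field_simp
      have t6 : Tendsto (fun k : ℕ =>
          ((d:ℝ)*n) * ((Real.log ((k:ℝ)+d) / ((k:ℝ)+d)) * (((k:ℝ)+d)/k)))
          atTop (nhds 0) := by
        simpa using (t2.mul t3).const_mul ((d:ℝ)*(n:ℝ))
      refine Filter.Tendsto.congr' ?_ t6
      filter_upwards [eventually_ge_atTop 1] with k hk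
      have hk0 : (k:ℝ) ≠ 0 := Nat.cast_ne_zero.mpr (by omega)
      have hkd0 : ((k:ℝ)+d) ≠ 0 := by positivity
      field_simp
    have hexp := (Real.continuous_exp.tendsto 0).comp hlog
    rw [Real.exp_zero] at hexp
    refine Filter.Tendsto.congr' ?_ hexp
    filter_upwards [eventually_ge_atTop 1] with k hk
    have hpos : (0:ℝ) < (k:ℝ) + d := by
      have h1 : (1:ℝ) ≤ (k:ℝ) := by exact_mod_cast hk
      linarith
    show Real.exp (Real.log ((k:ℝ)+d) * ((d*n:ℝ)/k)) = ((k:ℝ)+d) ^ ((d*n:ℝ)/k)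
    rw [Real.rpow_def_of_pos hpos]
  refine tendsto_of_tendsto_of_tendsto_of_le_of_le' tendsto_const_nhds henv ?_ ?_
  · filter_upwards [eventually_ge_atTop 1] with k hk using hlo k hk
  · filter_upwards [eventually_ge_atTop 1] with k hk using hup k hk

end InjAux

end AuxiliaryLemmas


/-- Combining the two bounds of the first hierarchy: for every `k ≥ 1`,
`Λ(ψ)^{2k} ≤ ‖F_k‖² ≤ C(k+d-1,k)^n Λ(ψ)^{2k}`, and hence
`‖F_k‖^{2/k} → Λ(ψ)²` as `k → ∞`. -/
theorem norm_Fk_two_sided_and_tendsto (ψ : EuclideanSpace ℂ (Fin n → Fin d))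
    (hψ : ‖ψ‖ = 1) :
    (∀ k : ℕ, 1 ≤ k →
      Lambda ψ ^ (2 * k) ≤ ‖Fvec ψ k‖ ^ 2 ∧
      ‖Fvec ψ k‖ ^ 2 ≤ (((k + d - 1).choose k : ℝ)) ^ n * Lambda ψ ^ (2 * k)) ∧
    Tendsto (fun k : ℕ => ‖Fvec ψ k‖ ^ ((2 : ℝ) / k)) atTop (nhds (Lambda ψ ^ 2)) := by
  haveI hne : Nonempty (Fin n → Fin d) := InjAux.nonempty_index ψ hψ
  have hL := InjAux.Lambda_pos ψ hψ
  refine ⟨fun k _ => ⟨InjAux.lower_bound ψ, InjAux.upper_bound ψ⟩, ?_⟩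
  have hdn : 0 < d ∨ n = 0 := by
    rcases Nat.eq_zero_or_pos d with hd | hd
    · right
      by_contra hn
      have hn' : 0 < n := Nat.pos_of_ne_zero hn
      obtain ⟨x⟩ := hne
      have h2 := (x ⟨0, hn'⟩).2
      omega
    · left; exact hd
  have hpow : ∀ (kk : ℕ), 1 ≤ kk → ∀ x : ℝ, 0 ≤ x → (x^(2*kk))^((1:ℝ)/kk) = x^2 := by
    intro kk hkk x hx
    have hk0 : (kk:ℝ) ≠ 0 := Nat.cast_ne_zero.mpr (by omega)
    rw [← Real.rpow_natCast x (2*kk), ← Real.rpow_mul hx]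
    rw [show ((2*kk : ℕ):ℝ) * ((1:ℝ)/kk) = ((2:ℕ):ℝ) by push_cast; field_simp]
    rw [Real.rpow_natCast]
  have key : ∀ k : ℕ, 1 ≤ k →
      ‖Fvec ψ k‖ ^ ((2:ℝ)/k) = (‖Fvec ψ k‖^2) ^ ((1:ℝ)/k) := by
    intro k hk
    rw [show (2:ℝ)/k = 2 * (1/k) by ring, Real.rpow_mul (norm_nonneg _)]
    congr 1
    rw [show ((2:ℝ)) = ((2:ℕ):ℝ) by norm_num, Real.rpow_natCast]
  have hklow : ∀ k : ℕ, 1 ≤ k → Lambda ψ^2 ≤ ‖Fvec ψ k‖ ^ ((2:ℝ)/k) := by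
    intro k hk
    rw [key k hk]
    have h1 : ((Lambda ψ^(2*k) : ℝ)) ^ ((1:ℝ)/k) ≤ (‖Fvec ψ k‖^2)^((1:ℝ)/k) :=
      Real.rpow_le_rpow (by positivity) (InjAux.lower_bound ψ) (by positivity)
    rw [hpow k hk _ hL.le] at h1
    exact h1
  have hkup : ∀ k : ℕ, 1 ≤ k → ‖Fvec ψ k‖ ^ ((2:ℝ)/k)
      ≤ Lambda ψ^2 * ((((k + d - 1).choose k : ℝ))^n) ^ ((1:ℝ)/k) := by
    intro k hk
    rw [key k hk]
    have h1 : (‖Fvec ψ k‖^2)^((1:ℝ)/k)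
        ≤ ((((k + d - 1).choose k : ℝ))^n * Lambda ψ^(2*k))^((1:ℝ)/k) :=
      Real.rpow_le_rpow (by positivity) (InjAux.upper_bound ψ) (by positivity)
    have h2 : ((((k + d - 1).choose k : ℝ))^n * Lambda ψ^(2*k))^((1:ℝ)/k)
        = ((((k + d - 1).choose k : ℝ))^n) ^ ((1:ℝ)/k) * Lambda ψ^2 := by
      rw [Real.mul_rpow (by positivity) (by positivity), hpow k hk _ hL.le]
    rw [h2] at h1
    calc (‖Fvec ψ k‖^2)^((1:ℝ)/k)
        ≤ ((((k + d - 1).choose k : ℝ))^n) ^ ((1:ℝ)/k) * Lambda ψ^2 := h1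
      _ = Lambda ψ^2 * ((((k + d - 1).choose k : ℝ))^n) ^ ((1:ℝ)/k) := mul_comm _ _
  have henv : Tendsto (fun k : ℕ => Lambda ψ^2 * ((((k + d - 1).choose k : ℝ))^n) ^ ((1:ℝ)/k))
      atTop (nhds (Lambda ψ^2)) := by
    have h := (InjAux.tendsto_root_C hdn).const_mul (Lambda ψ^2)
    simpa using h
  refine tendsto_of_tendsto_of_tendsto_of_le_of_le' tendsto_const_nhds henv ?_ ?_
  · filter_upwards [eventually_ge_atTop 1] with k hk using hklow k hk
  · filter_upwards [eventually_ge_atTop 1] with k hk using hkup k hk
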